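/- arXiv:1211.3581 — 4 statements merged into one kernel-verified Lean document; each statement's English description precedes it below -/
import Mathlib

section
/- Every compact topological space in which player I has no winning strategy in the game G^{ω₁}₁(O,O) is sequentially compact. -/
open Set

/-- `ω₁` as an ordinal. -/
noncomputable def omega1 : Ordinal := (Cardinal.aleph 1).ord

/-- A family of sets is an open cover of the whole space. -/
def IsOpenCover {X : Type*} [TopologicalSpace X] (𝒰 : Set (Set X)) : Prop :=
  (∀ U ∈ 𝒰, IsOpen U) ∧ ⋃₀ 𝒰 = Set.univ

/-- A strategy for player I in the game `G^{ω₁}₁(𝒪,𝒪)`: to each inning `α < ω₁`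
and each history of player II's previous choices it assigns a family of sets
(intended to be an open cover). -/
def StrategyI (X : Type*) [TopologicalSpace X] : Type _ :=
  ∀ α : Ordinal, α < omega1 → ((β : Ordinal) → β < α → Set X) → Set (Set X)

/-- `σ` is a winning strategy for player I: it always plays open covers and,
whenever player II plays along `σ` (choosing at each inning a member of the
cover just played), the sets chosen by II fail to cover `X`. -/
def IsWinningStrategyI {X : Type*} [TopologicalSpace X] (σ : StrategyI X) : Prop :=
  (∀ (α : Ordinal) (hα : α < omega1) (hist : (β : Ordinal) → β < α → Set X),
      IsOpenCover (σ α hα hist)) ∧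
  ∀ f : (α : Ordinal) → α < omega1 → Set X,
    (∀ (α : Ordinal) (hα : α < omega1),
        f α hα ∈ σ α hα (fun β hβ => f β (hβ.trans hα))) →
    (⋃ (α : Ordinal), ⋃ (hα : α < omega1), f α hα) ≠ Set.univ

open Filter Topology

namespace Stmt1Aux

variable {X : Type*} [TopologicalSpace X]

/-- The cover played by player I, given a set `T` of indices of the sequence `x`:
all open sets `U` such that infinitely many indices in `T` have `x n ∉ U`. -/
def coverOf (x : ℕ → X) (T : Set ℕ) : Set (Set X) :=
  {U | IsOpen U ∧ {n | n ∈ T ∧ x n ∉ U}.Infinite}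

open Classical in
/-- The auxiliary family of index sets, defined by transfinite recursion on the history. -/
noncomputable def Tfam (x : ℕ → X) (α : Ordinal)
    (hist : (β : Ordinal) → β < α → Set X) : Set ℕ :=
  if h : ∃ T : Set ℕ, T.Infinite ∧ ∀ (β : Ordinal) (hβ : β < α),
      (T \ (Tfam x β (fun γ hγ => hist γ (hγ.trans hβ)) ∩ {n | x n ∉ hist β hβ})).Finite
  then h.choose else Set.univ
termination_by α

theorem Tfam_infinite (x : ℕ → X) (α : Ordinal)
    (hist : (β : Ordinal) → β < α → Set X) : (Tfam x α hist).Infinite := by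
  rw [Tfam]
  split
  next h => exact h.choose_spec.1
  next => exact Set.infinite_univ

theorem Tfam_spec (x : ℕ → X) (α : Ordinal)
    (hist : (β : Ordinal) → β < α → Set X)
    (h : ∃ T : Set ℕ, T.Infinite ∧ ∀ (β : Ordinal) (hβ : β < α),
      (T \ (Tfam x β (fun γ hγ => hist γ (hγ.trans hβ)) ∩ {n | x n ∉ hist β hβ})).Finite) :
    ∀ (β : Ordinal) (hβ : β < α),
      (Tfam x α hist \
        (Tfam x β (fun γ hγ => hist γ (hγ.trans hβ)) ∩ {n | x n ∉ hist β hβ})).Finite := by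
  rw [Tfam, dif_pos h]
  exact h.choose_spec.2

/-- The strategy for player I. -/
noncomputable def strat (x : ℕ → X) : StrategyI X :=
  fun α _ hist => coverOf x (Tfam x α hist)

/-- When `x` has no convergent subsequence, `coverOf x T` is an open cover for infinite `T`. -/
theorem isOpenCover_coverOf (x : ℕ → X)
    (hx : ∀ (a : X) (φ : ℕ → ℕ), StrictMono φ → ¬ Tendsto (x ∘ φ) atTop (𝓝 a))
    {T : Set ℕ} (hT : T.Infinite) : IsOpenCover (coverOf x T) := by
  refine ⟨fun U hU => hU.1, Set.eq_univ_of_forall fun p => ?_⟩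
  by_contra hp
  have key : ∀ U : Set X, IsOpen U → p ∈ U → {n | n ∈ T ∧ x n ∉ U}.Finite := by
    intro U hU hpU
    by_contra hfin
    exact hp ⟨U, ⟨hU, hfin⟩, hpU⟩
  obtain ⟨φ, hφ, hφT⟩ := Filter.extraction_of_frequently_atTop
    (Nat.frequently_atTop_iff_infinite.2 (by exact hT))
  apply hx p φ hφ
  intro s hs
  obtain ⟨U, hUs, hU, hpU⟩ := mem_nhds_iff.1 hs
  obtain ⟨N, hN⟩ := (key U hU hpU).bddAbove
  rw [Filter.mem_map]
  filter_upwards [Filter.eventually_ge_atTop (N + 1)] with k hk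
  have hφk : N + 1 ≤ φ k := le_trans hk (hφ.le_apply)
  have hxU : x (φ k) ∈ U := by
    by_contra hxk
    have hmem : φ k ∈ {n | n ∈ T ∧ x n ∉ U} := ⟨hφT k, hxk⟩
    exact absurd (hN hmem) (by omega)
  exact hUs hxU

/-- Pseudo-intersection of a countable family whose finite intersections are infinite. -/
theorem pseudo (A : ℕ → Set ℕ)
    (h : ∀ k, (⋂ j ∈ Finset.range (k + 1), A j).Infinite) :
    ∃ T : Set ℕ, T.Infinite ∧ ∀ i, (T \ A i).Finite := by
  choose g hg hlt using fun k (b : ℕ) => (h k).exists_gt b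
  let n : ℕ → ℕ := fun k => Nat.rec (g 0 0) (fun k ih => g (k + 1) ih) k
  have hmono : StrictMono n := strictMono_nat_of_lt_succ fun k => hlt (k + 1) (n k)
  have hmem : ∀ k, n k ∈ ⋂ j ∈ Finset.range (k + 1), A j := by
    intro k
    cases k with
    | zero => exact hg 0 0
    | succ k => exact hg (k + 1) (n k)
  refine ⟨Set.range n, Set.infinite_range_of_injective hmono.injective, fun i => ?_⟩
  have hsub : Set.range n \ A i ⊆ n '' Set.Iio i := by
    rintro m ⟨⟨k, rfl⟩, hm⟩
    refine ⟨k, ?_, rfl⟩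
    by_contra hk
    rw [Set.mem_Iio, not_lt] at hk
    exact hm (Set.mem_iInter₂.1 (hmem k) i (Finset.mem_range.2 (Nat.lt_succ_of_le hk)))
  exact ((Set.finite_Iio i).image n).subset hsub

theorem exists_surj (α : Ordinal) (hα : α < omega1) (h0 : α ≠ 0) :
    ∃ g : ℕ → ↥(Set.Iio α), Function.Surjective g := by
  have hc : (Set.Iio α).Countable := by
    rw [Cardinal.countable_iff_lt_aleph_one, Ordinal.mk_Iio_ordinal]
    have h1 : α.card < Cardinal.aleph 1 := Cardinal.lt_ord.1 hα
    have := (Cardinal.lift_lt.{_, _}).2 h1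
    rwa [Cardinal.lift_aleph, Ordinal.lift_one] at this
  have hne : (Set.Iio α).Nonempty := ⟨0, pos_iff_ne_zero.2 h0⟩
  exact (Set.countable_iff_exists_surjective hne).1 hc

theorem inf_principal_le_principal {s t : Set ℕ} (h : (s \ t).Finite) :
    atTop ⊓ 𝓟 s ≤ 𝓟 t := by
  obtain ⟨N, hN⟩ := h.bddAbove
  rw [Filter.le_principal_iff]
  have : Set.Ici (N + 1) ∩ s ⊆ t := by
    rintro m ⟨hm1, hm2⟩
    by_contra hmt
    exact absurd (hN ⟨hm2, hmt⟩) (by simp only [Set.mem_Ici] at hm1; omega)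
  exact Filter.mem_of_superset (Filter.inter_mem_inf (Filter.Ici_mem_atTop _)
    (Filter.mem_principal_self s)) this

theorem atTop_inf_principal_neBot {T : Set ℕ} (hT : T.Infinite) :
    (atTop ⊓ 𝓟 T).NeBot := by
  rw [Filter.inf_principal_neBot_iff]
  intro U hU
  obtain ⟨N, hN⟩ := Filter.mem_atTop_sets.1 hU
  obtain ⟨b, hbT, hbN⟩ := hT.exists_gt N
  exact ⟨b, hN b hbN.le, hbT⟩

/-- Index set for a play. -/
noncomputable def Tplay (x : ℕ → X) (f : (α : Ordinal) → α < omega1 → Set X)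
    (α : Ordinal) (hα : α < omega1) : Set ℕ :=
  Tfam x α (fun β hβ => f β (hβ.trans hα))

theorem main_spec (x : ℕ → X) (f : (α : Ordinal) → α < omega1 → Set X)
    (hf : ∀ (α : Ordinal) (hα : α < omega1),
        f α hα ∈ strat x α hα (fun β hβ => f β (hβ.trans hα))) :
    ∀ (α : Ordinal) (hα : α < omega1) (β : Ordinal) (hβ : β < α),
      (Tplay x f α hα \
        (Tplay x f β (hβ.trans hα) ∩ {n | x n ∉ f β (hβ.trans hα)})).Finite := by
  intro α
  induction α using Ordinal.induction with
  | h α IH =>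
    intro hα
    have hex : ∃ T : Set ℕ, T.Infinite ∧ ∀ (β : Ordinal) (hβ : β < α),
        (T \ (Tplay x f β (hβ.trans hα) ∩ {n | x n ∉ f β (hβ.trans hα)})).Finite := by
      rcases eq_or_ne α 0 with rfl | h0
      · exact ⟨Set.univ, Set.infinite_univ, fun β hβ => absurd hβ (not_lt_of_ge (zero_le (a := β)))⟩
      · obtain ⟨g, hg⟩ := exists_surj α hα h0
        set A : ↥(Set.Iio α) → Set ℕ :=
          fun β => Tplay x f β.1 (β.2.trans hα) ∩ {n | x n ∉ f β.1 (β.2.trans hα)} with hA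
        have hAinf : ∀ β, (A β).Infinite := by
          intro β
          exact (hf β.1 (β.2.trans hα)).2
        have hchain : ∀ β γ : ↥(Set.Iio α), β ≤ γ → (A γ \ A β).Finite := by
          intro β γ hle
          rcases eq_or_lt_of_le hle with heq | hlt
          · simp [heq]
          · have h1 := IH γ.1 γ.2 (γ.2.trans hα) β.1 hlt
            exact h1.subset fun m hm => ⟨hm.1.1, hm.2⟩
        have hint : ∀ k, (⋂ j ∈ Finset.range (k + 1), A (g j)).Infinite := by
          intro k
          obtain ⟨j₀, hj₀mem, hj₀⟩ := Finset.exists_max_image (Finset.range (k + 1))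
            (fun j => g j) ⟨0, Finset.mem_range.2 (Nat.succ_pos k)⟩
          have hfin : (⋃ j ∈ Finset.range (k + 1), (A (g j₀) \ A (g j))).Finite :=
            Set.Finite.biUnion (Finset.range (k + 1)).finite_toSet
              (fun j hj => hchain (g j) (g j₀) (hj₀ j hj))
          have hsub : A (g j₀) \ (⋃ j ∈ Finset.range (k + 1), (A (g j₀) \ A (g j))) ⊆
              ⋂ j ∈ Finset.range (k + 1), A (g j) := by
            rintro m ⟨hm1, hm2⟩
            refine Set.mem_iInter₂.2 fun j hj => ?_
            by_contra hmj
            exact hm2 (Set.mem_biUnion hj ⟨hm1, hmj⟩)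
          exact (((hAinf (g j₀)).diff hfin).mono hsub)
        obtain ⟨T, hTinf, hTsub⟩ := pseudo (fun k => A (g k)) hint
        refine ⟨T, hTinf, fun β hβ => ?_⟩
        obtain ⟨k, hk⟩ := hg ⟨β, hβ⟩
        have := hTsub k
        rw [hk] at this
        exact this
    intro β hβ
    exact Tfam_spec x α (fun β hβ => f β (hβ.trans hα)) hex β hβ

end Stmt1Aux

open Stmt1Aux

set_option maxHeartbeats 1000000 in
/-- a compact space in which player I has no winning strategy in
`G^{ω₁}₁(𝒪,𝒪)` is sequentially compact. -/
theorem stmt1 {X : Type*} [TopologicalSpace X] [CompactSpace X]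
    (h : ¬ ∃ σ : StrategyI X, IsWinningStrategyI σ) :
    SeqCompactSpace X := by
  by_contra hseq
  apply h
  have hnsc : ¬ IsSeqCompact (Set.univ : Set X) := fun hs => hseq ⟨hs⟩
  rw [IsSeqCompact] at hnsc
  push_neg at hnsc
  obtain ⟨x, -, hx⟩ := hnsc
  have hx' : ∀ (a : X) (φ : ℕ → ℕ), StrictMono φ → ¬ Tendsto (x ∘ φ) atTop (𝓝 a) := by
    intro a φ hφ ht
    exact absurd ht (hx a (Set.mem_univ a) φ hφ)
  refine ⟨strat x, fun α hα hist => isOpenCover_coverOf x hx' (Tfam_infinite x α hist), ?_⟩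
  intro f hf hcov
  have hmain := main_spec x f hf
  have h0lt : (0 : Ordinal) < omega1 := by
    rw [omega1, Cardinal.lt_ord]
    simpa using Cardinal.aleph_pos 1
  haveI : Nonempty ↥(Set.Iio omega1) := ⟨⟨0, h0lt⟩⟩
  let F : ↥(Set.Iio omega1) → Filter X :=
    fun a => Filter.map x (atTop ⊓ 𝓟 (Tplay x f a.1 a.2))
  have hFle : ∀ a b : ↥(Set.Iio omega1), a ≤ b → F b ≤ F a := by
    intro a b hab
    rcases eq_or_lt_of_le hab with heq | hlt
    · rw [heq]
    · apply Filter.map_mono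
      have hdiff : (Tplay x f b.1 b.2 \ Tplay x f a.1 a.2).Finite := by
        refine (hmain b.1 b.2 a.1 hlt).subset fun m hm => ⟨hm.1, fun hmem => hm.2 hmem.1⟩
      exact le_inf inf_le_left (inf_principal_le_principal hdiff)
  haveI hFneBot : ∀ a, (F a).NeBot := by
    intro a
    haveI := atTop_inf_principal_neBot (T := Tplay x f a.1 a.2)
      (Tfam_infinite x a.1 (fun β hβ => f β (hβ.trans a.2)))
    exact Filter.map_neBot
  have hdir : Directed (· ≥ ·) F := by
    intro a b
    rcases le_total a b with hab | hba
    · exact ⟨b, hFle a b hab, le_refl _⟩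
    · exact ⟨a, le_refl _, hFle b a hba⟩
  haveI hGneBot : (⨅ a, F a).NeBot := Filter.iInf_neBot_of_directed' hdir hFneBot
  obtain ⟨p, hp⟩ := exists_clusterPt_of_compactSpace (⨅ a, F a)
  have hnotmem : ∀ (α : Ordinal) (hα : α < omega1), p ∉ f α hα := by
    intro α hα hpf
    have hsucc : α + 1 < omega1 := by
      have hl : Order.IsSuccLimit omega1 := Cardinal.isSuccLimit_ord (Cardinal.aleph0_le_aleph 1)
      rw [Ordinal.add_one_eq_succ]
      exact hl.succ_lt hα
    have hαsucc : α < α + 1 := by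
      rw [Ordinal.add_one_eq_succ]; exact Order.lt_succ α
    have hfin : (Tplay x f (α + 1) hsucc \ {n | x n ∉ f α hα}).Finite := by
      refine (hmain (α + 1) hsucc α hαsucc).subset fun m hm => ⟨hm.1, fun hmem => ?_⟩
      exact hm.2 hmem.2
    have h2' : {n | x n ∉ f α hα} ∈ atTop ⊓ 𝓟 (Tplay x f (α + 1) hsucc) :=
      Filter.le_principal_iff.mp (inf_principal_le_principal hfin)
    have h2 : (f α hα)ᶜ ∈ F ⟨α + 1, hsucc⟩ := Filter.mem_map.mpr h2' 
    have h3 : (f α hα)ᶜ ∈ ⨅ a, F a := Filter.mem_iInf_of_mem ⟨α + 1, hsucc⟩ h2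
    have h4 : f α hα ∈ 𝓝 p := (hf α hα).1.mem_nhds hpf
    have h5 : (∅ : Set X) ∈ 𝓝 p ⊓ (⨅ a, F a) := by
      have := Filter.inter_mem (Filter.mem_inf_of_left h4) (Filter.mem_inf_of_right h3)
      simpa using this
    exact hp.neBot.ne (Filter.empty_mem_iff_bot.1 h5)
  have hpmem : p ∈ ⋃ (α : Ordinal), ⋃ (hα : α < omega1), f α hα := hcov ▸ Set.mem_univ p
  simp only [Set.mem_iUnion] at hpmem
  obtain ⟨α, hα, hpf⟩ := hpmem
  exact hnotmem α hα hpf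
end

section
/- If X is a compact topological space that is not sequentially compact, then player I has a winning strategy in the game G^{ω₁}₁(O,O) on X. -/
open Set

open Filter Topology

section Aux

variable {X : Type*}

open scoped Classical in
noncomputable def Mset (x : ℕ → X) :
    (α : Ordinal) → ((β : Ordinal) → β < α → Set X) → Set ℕ
  | α, hist =>
    if h : ∃ N : Set ℕ, N.Infinite ∧ ∀ (β : Ordinal) (hβ : β < α),
        (N \ {n | n ∈ Mset x β (fun γ hγ => hist γ (hγ.trans hβ)) ∧ x n ∉ hist β hβ}).Finite
    then h.choose else Set.univ
  termination_by α _ => α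
  decreasing_by all_goals exact hβ

theorem Mset_spec (x : ℕ → X) (α : Ordinal) (hist : (β : Ordinal) → β < α → Set X)
    (h : ∃ N : Set ℕ, N.Infinite ∧ ∀ (β : Ordinal) (hβ : β < α),
        (N \ {n | n ∈ Mset x β (fun γ hγ => hist γ (hγ.trans hβ)) ∧ x n ∉ hist β hβ}).Finite) :
    (Mset x α hist).Infinite ∧ ∀ (β : Ordinal) (hβ : β < α),
        (Mset x α hist \
          {n | n ∈ Mset x β (fun γ hγ => hist γ (hγ.trans hβ)) ∧ x n ∉ hist β hβ}).Finite := by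
  rw [Mset, dif_pos h]
  exact h.choose_spec

theorem Mset_infinite (x : ℕ → X) (α : Ordinal)
    (hist : (β : Ordinal) → β < α → Set X) : (Mset x α hist).Infinite := by
  rw [Mset]
  split
  · next h => exact h.choose_spec.1
  · exact Set.infinite_univ

open scoped Classical in
noncomputable def Mf (x : ℕ → X) (f : (α : Ordinal) → α < omega1 → Set X) (β : Ordinal) :
    Set ℕ :=
  if hβ : β < omega1 then Mset x β (fun γ hγ => f γ (hγ.trans hβ)) else Set.univ

open scoped Classical in
noncomputable def Cf (x : ℕ → X) (f : (α : Ordinal) → α < omega1 → Set X) (β : Ordinal) :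
    Set ℕ :=
  if hβ : β < omega1 then {n | n ∈ Mf x f β ∧ x n ∉ f β hβ} else ∅

theorem Mf_eq (x : ℕ → X) (f : (α : Ordinal) → α < omega1 → Set X) (β : Ordinal)
    (hβ : β < omega1) : Mf x f β = Mset x β (fun γ hγ => f γ (hγ.trans hβ)) := dif_pos hβ

theorem Cf_eq (x : ℕ → X) (f : (α : Ordinal) → α < omega1 → Set X) (β : Ordinal)
    (hβ : β < omega1) : Cf x f β = {n | n ∈ Mf x f β ∧ x n ∉ f β hβ} := dif_pos hβ

theorem Cf_subset (x : ℕ → X) (f : (α : Ordinal) → α < omega1 → Set X) (β : Ordinal)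
    (hβ : β < omega1) : Cf x f β ⊆ Mf x f β := by
  rw [Cf_eq x f β hβ]; exact fun n hn => hn.1

theorem Mf_spec (x : ℕ → X) (f : (α : Ordinal) → α < omega1 → Set X) (α : Ordinal)
    (hα : α < omega1)
    (h : ∃ N : Set ℕ, N.Infinite ∧ ∀ β : Ordinal, β < α → (N \ Cf x f β).Finite) :
    (Mf x f α).Infinite ∧ ∀ β : Ordinal, β < α → (Mf x f α \ Cf x f β).Finite := by
  have h' : ∃ N : Set ℕ, N.Infinite ∧ ∀ (β : Ordinal) (hβ : β < α),
      (N \ {n | n ∈ Mset x β (fun γ hγ => f γ ((hγ.trans hβ).trans hα)) ∧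
        x n ∉ f β (hβ.trans hα)}).Finite := by
    obtain ⟨N, hN1, hN2⟩ := h
    refine ⟨N, hN1, fun β hβ => ?_⟩
    have h3 := hN2 β hβ
    rwa [Cf_eq x f β (hβ.trans hα), Mf_eq x f β (hβ.trans hα)] at h3
  have h4 := Mset_spec x α (fun β hβ => f β (hβ.trans hα)) h'
  constructor
  · rw [Mf_eq x f α hα]; exact h4.1
  · intro β hβ
    rw [Mf_eq x f α hα, Cf_eq x f β (hβ.trans hα), Mf_eq x f β (hβ.trans hα)]
    exact h4.2 β hβ

theorem exists_bad_seq [TopologicalSpace X] (h : ¬ SeqCompactSpace X) :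
    ∃ x : ℕ → X, ∀ (z : X) (e : ℕ → ℕ), StrictMono e → ¬ Tendsto (x ∘ e) atTop (𝓝 z) := by
  by_contra hc
  push_neg at hc
  refine h ⟨fun x _ => ?_⟩
  obtain ⟨z, e, he, ht⟩ := hc x
  exact ⟨z, mem_univ z, e, he, ht⟩

theorem cover_lemma [TopologicalSpace X] (x : ℕ → X)
    (hx : ∀ (z : X) (e : ℕ → ℕ), StrictMono e → ¬ Tendsto (x ∘ e) atTop (𝓝 z))
    (M : Set ℕ) (hM : M.Infinite) (z : X) :
    ∃ U, IsOpen U ∧ z ∈ U ∧ {n | n ∈ M ∧ x n ∉ U}.Infinite := by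
  by_contra hcon
  push_neg at hcon
  choose g hg1 hg2 using fun a => hM.exists_gt a
  set e : ℕ → ℕ := fun k => Nat.rec (g 0) (fun _ ih => g ih) k with he
  have he1 : ∀ k, e k ∈ M := by
    intro k; cases k with
    | zero => exact hg1 0
    | succ k => exact hg1 (e k)
  have hmono : StrictMono e := strictMono_nat_of_lt_succ (fun k => hg2 (e k))
  refine hx z e hmono ?_
  rw [tendsto_nhds]
  intro s hs hzs
  have hfin : {n | n ∈ M ∧ x n ∉ s}.Finite := by
    rw [← Set.not_infinite]
    intro hinf
    exact hinf (Set.finite_coe_iff.mp (hcon s hs hzs))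
  obtain ⟨B, hB⟩ := hfin.bddAbove
  filter_upwards [eventually_gt_atTop B] with k hk
  by_contra hxk
  have h1 : e k ≤ B := hB ⟨he1 k, hxk⟩
  have h2 : k ≤ e k := hmono.le_apply
  omega

theorem almost_le_principal (M M' : Set ℕ) (hfin : (M' \ M).Finite) :
    (atTop : Filter ℕ) ⊓ 𝓟 M' ≤ 𝓟 M := by
  obtain ⟨B, hB⟩ := hfin.bddAbove
  rw [le_principal_iff]
  have hsub : Ici (B + 1) ∩ M' ⊆ M := by
    intro n ⟨hn1, hn2⟩
    by_contra hn3
    have h4 := hB (⟨hn2, hn3⟩ : n ∈ M' \ M)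
    have h5 : B + 1 ≤ n := hn1
    omega
  exact mem_of_superset (inter_mem_inf (Ici_mem_atTop _) (mem_principal_self _)) hsub

theorem infinite_neBot {M : Set ℕ} (hM : M.Infinite) : ((atTop : Filter ℕ) ⊓ 𝓟 M).NeBot := by
  rw [inf_principal_neBot_iff]
  intro U hU
  obtain ⟨a, ha⟩ := mem_atTop_sets.mp hU
  obtain ⟨b, hb, hab⟩ := hM.exists_gt a
  exact ⟨b, ha b hab.le, hb⟩

theorem omega1_pos : (0 : Ordinal) < omega1 := by
  rw [show omega1 = (Cardinal.aleph 1).ord from rfl, Cardinal.lt_ord]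
  simpa using Cardinal.aleph_pos 1

theorem omega1_isLimit : Order.IsSuccLimit omega1 :=
  Cardinal.isSuccLimit_ord Cardinal.aleph0_lt_aleph_one.le

theorem key_good (x : ℕ → X) (f : (α : Ordinal) → α < omega1 → Set X)
    (hC : ∀ β : Ordinal, β < omega1 → (Cf x f β).Infinite) :
    ∀ α : Ordinal, α < omega1 →
      ∃ N : Set ℕ, N.Infinite ∧ ∀ β : Ordinal, β < α → (N \ Cf x f β).Finite := by
  intro α
  induction α using Ordinal.induction with
  | h α IH =>
  intro hα
  by_cases h0 : α = 0
  · subst h0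
    exact ⟨Set.univ, infinite_univ, fun β hβ => absurd hβ (by simp)⟩
  -- facts about earlier stages
  have spec : ∀ β : Ordinal, β < α →
      (Mf x f β).Infinite ∧ ∀ γ : Ordinal, γ < β → (Mf x f β \ Cf x f γ).Finite :=
    fun β hβ => Mf_spec x f β (hβ.trans hα) (IH β hβ (hβ.trans hα))
  have hCC : ∀ β γ : Ordinal, γ < β → β < α → (Cf x f β \ Cf x f γ).Finite := by
    intro β γ h1 h2
    exact ((spec β h2).2 γ h1).subset
      (diff_subset_diff_left (Cf_subset x f β ((h2).trans hα)))
  -- a countable enumeration of `Iio α`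
  have hcount : (Set.Iio α).Countable := by
    rw [Cardinal.countable_iff_lt_aleph_one, Ordinal.mk_Iio_ordinal]
    exact Cardinal.lift_lt_aleph_one.mpr (Cardinal.lt_ord.mp hα)
  obtain ⟨e, he⟩ := hcount.exists_eq_range ⟨0, pos_iff_ne_zero.mpr h0⟩
  have heα : ∀ k, e k < α := by
    intro k
    have : e k ∈ Set.Iio α := by rw [he]; exact Set.mem_range_self k
    exact this
  -- the decreasing finite intersections
  set D : ℕ → Set ℕ := fun k => ⋂ j ∈ Finset.range (k + 1), Cf x f (e j) with hD
  have hDmem : ∀ (k n : ℕ), n ∈ D k ↔ ∀ j : ℕ, j ≤ k → n ∈ Cf x f (e j) := by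
    intro k n
    rw [hD]
    simp [Nat.lt_succ_iff]
  have hDinf : ∀ k, (D k).Infinite := by
    intro k
    obtain ⟨j0, hj0mem, hj0⟩ :=
      Finset.exists_mem_eq_sup (Finset.range (k + 1)) ⟨0, by simp⟩ (fun j => e j)
    have hmax : ∀ j : ℕ, j ≤ k → e j ≤ e j0 := by
      intro j hj
      calc e j ≤ (Finset.range (k + 1)).sup (fun j => e j) :=
            Finset.le_sup (Finset.mem_range.mpr (Nat.lt_succ_of_le hj))
        _ = e j0 := hj0
    have hfin : (Cf x f (e j0) \ D k).Finite := by
      have hsub : Cf x f (e j0) \ D k ⊆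
          ⋃ j ∈ Finset.range (k + 1), (Cf x f (e j0) \ Cf x f (e j)) := by
        intro n hn
        have hn2 : ¬ ∀ j : ℕ, j ≤ k → n ∈ Cf x f (e j) := fun hcon => hn.2 ((hDmem k n).mpr hcon)
        push_neg at hn2
        obtain ⟨j, hj1, hj2⟩ := hn2
        exact Set.mem_biUnion (Finset.mem_coe.mpr (Finset.mem_range.mpr (Nat.lt_succ_of_le hj1)))
          ⟨hn.1, hj2⟩
      refine Set.Finite.subset (Set.Finite.biUnion (Finset.range (k + 1)).finite_toSet
        (fun j hj => ?_)) hsub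
      rcases lt_or_eq_of_le (hmax j (Nat.lt_succ_iff.mp (Finset.mem_range.mp hj))) with hlt | heq2
      · exact hCC (e j0) (e j) hlt (heα j0)
      · rw [heq2]
        simp
    have hinf2 := (hC (e j0) ((heα j0).trans hα)).diff hfin
    refine hinf2.mono ?_
    intro n hn
    by_contra hnd
    exact hn.2 ⟨hn.1, hnd⟩
  -- pseudo-intersection
  choose g hg1 hg2 using fun (k : ℕ) (a : ℕ) => (hDinf k).exists_gt a
  set nseq : ℕ → ℕ := fun k => Nat.rec (g 0 0) (fun k ih => g (k + 1) ih) k with hnseq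
  have hnmem : ∀ k, nseq k ∈ D k := by
    intro k; cases k with
    | zero => exact hg1 0 0
    | succ k => exact hg1 (k + 1) (nseq k)
  have hnmono : StrictMono nseq := strictMono_nat_of_lt_succ (fun k => hg2 (k + 1) (nseq k))
  refine ⟨Set.range nseq, Set.infinite_range_of_injective hnmono.injective, ?_⟩
  intro β hβ
  obtain ⟨j, hj⟩ : ∃ j, e j = β := by
    have : β ∈ Set.range e := by rw [← he]; exact hβ
    exact this
  refine Set.Finite.subset ((Set.finite_Iio j).image nseq) ?_
  rintro y ⟨⟨k, rfl⟩, hy2⟩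
  refine ⟨k, ?_, rfl⟩
  by_contra hk
  simp only [Set.mem_Iio, not_lt] at hk
  have : nseq k ∈ Cf x f (e j) := (hDmem k (nseq k)).mp (hnmem k) j hk
  rw [hj] at this
  exact hy2 this

end Aux

/-- if a compact space is not sequentially compact, then player I
has a winning strategy in `G^{ω₁}₁(𝒪,𝒪)`. -/
theorem stmt2 {X : Type*} [TopologicalSpace X] [CompactSpace X]
    (h : ¬ SeqCompactSpace X) :
    ∃ σ : StrategyI X, IsWinningStrategyI σ := by
  obtain ⟨x, hx⟩ := exists_bad_seq h
  refine ⟨fun α hα hist =>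
    {U : Set X | IsOpen U ∧ {n | n ∈ Mset x α hist ∧ x n ∉ U}.Infinite}, ?_, ?_⟩
  · -- player I always plays open covers
    intro α hα hist
    constructor
    · exact fun U hU => hU.1
    · rw [Set.sUnion_eq_univ_iff]
      intro z
      obtain ⟨U, hU1, hU2, hU3⟩ := cover_lemma x hx _ (Mset_infinite x α hist) z
      exact ⟨U, ⟨hU1, hU3⟩, hU2⟩
  · -- the strategy is winning
    intro f hf heq
    have hopen : ∀ (α : Ordinal) (hα : α < omega1), IsOpen (f α hα) := fun α hα => (hf α hα).1
    have hC : ∀ β : Ordinal, β < omega1 → (Cf x f β).Infinite := by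
      intro β hβ
      rw [Cf_eq x f β hβ, Mf_eq x f β hβ]
      exact (hf β hβ).2
    have spec : ∀ (α : Ordinal), α < omega1 →
        (Mf x f α).Infinite ∧ ∀ β : Ordinal, β < α → (Mf x f α \ Cf x f β).Finite :=
      fun α hα => Mf_spec x f α hα (key_good x f hC α hα)
    set G : Filter ℕ := ⨅ α : {α : Ordinal // α < omega1}, ((atTop : Filter ℕ) ⊓ 𝓟 (Mf x f α.1))
      with hG
    have halmost : ∀ β γ : Ordinal, γ ≤ β → β < omega1 → (Mf x f β \ Mf x f γ).Finite := by
      intro β γ hle hβ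
      rcases eq_or_lt_of_le hle with rfl | hlt
      · simp
      · exact ((spec β hβ).2 γ hlt).subset
          (fun n hn => ⟨hn.1, fun hmem => hn.2 (Cf_subset x f γ (hlt.trans hβ) hmem)⟩)
    have hdir : Directed (· ≥ ·)
        (fun α : {α : Ordinal // α < omega1} => ((atTop : Filter ℕ) ⊓ 𝓟 (Mf x f α.1))) := by
      intro a b
      rcases le_total a.1 b.1 with hab | hba
      · exact ⟨b, le_inf inf_le_left (almost_le_principal _ _ (halmost b.1 a.1 hab b.2)), le_rfl⟩
      · exact ⟨a, le_rfl, le_inf inf_le_left (almost_le_principal _ _ (halmost a.1 b.1 hba a.2))⟩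
    haveI hGne : G.NeBot := by
      rw [hG]
      exact iInf_neBot_of_directed hdir (fun a => infinite_neBot (spec a.1 a.2).1)
    haveI : (Filter.map x G).NeBot := hGne.map x
    obtain ⟨z, -, hz⟩ :=
      isCompact_univ.exists_clusterPt (f := Filter.map x G) (le_principal_iff.mpr univ_mem)
    have hzu : z ∈ ⋃ (α : Ordinal), ⋃ (hα : α < omega1), f α hα := heq ▸ mem_univ z
    rw [Set.mem_iUnion] at hzu
    obtain ⟨α, hzu⟩ := hzu
    rw [Set.mem_iUnion] at hzu
    obtain ⟨hα, hzα⟩ := hzu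
    have hα1 : α + 1 < omega1 := by
      rw [Ordinal.add_one_eq_succ]
      exact omega1_isLimit.succ_lt hα
    have hsucc : α < α + 1 := by
      rw [Ordinal.add_one_eq_succ]
      exact Order.lt_succ α
    have hmem : {n : ℕ | x n ∉ f α hα} ∈ (atTop : Filter ℕ) ⊓ 𝓟 (Mf x f (α + 1)) := by
      have hfin : {n | n ∈ Mf x f (α + 1) ∧ x n ∈ f α hα}.Finite := by
        refine ((spec (α + 1) hα1).2 α hsucc).subset ?_
        intro n hn
        refine ⟨hn.1, ?_⟩
        rw [Cf_eq x f α hα]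
        intro hmem'
        exact hmem'.2 hn.2
      obtain ⟨B, hB⟩ := hfin.bddAbove
      refine mem_of_superset (inter_mem_inf (Ici_mem_atTop (B + 1)) (mem_principal_self _)) ?_
      intro n hn
      by_contra hn3
      have h4 : n ≤ B := hB (⟨hn.2, not_not.mp hn3⟩ : n ∈ {n | n ∈ Mf x f (α + 1) ∧ x n ∈ f α hα})
      have h5 : B + 1 ≤ n := hn.1
      omega
    have hmemG : (f α hα)ᶜ ∈ Filter.map x G := by
      rw [Filter.mem_map]
      have hle : G ≤ (atTop : Filter ℕ) ⊓ 𝓟 (Mf x f (α + 1)) := by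
        rw [hG]
        exact iInf_le _ (⟨α + 1, hα1⟩ : {α : Ordinal // α < omega1})
      exact hle hmem
    have hbot : (𝓝 z ⊓ Filter.map x G) = ⊥ := by
      rw [← Filter.empty_mem_iff_bot]
      have h6 := inter_mem_inf ((hopen α hα).mem_nhds hzα) hmemG
      simpa using h6
    exact hz.ne hbot
end

section
/- Every Lindelöf Hausdorff space in which player I has no winning strategy in the game G^{ω₁}₁(O,O) has the finite derived set property. -/
open Set

/-- `q` is an accumulation point of `S`: every open neighborhood of `q` meets
`S` in a point other than `q`. -/
def IsAccumulationPt {X : Type*} [TopologicalSpace X] (q : X) (S : Set X) : Prop :=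
  ∀ U : Set X, IsOpen U → q ∈ U → ∃ y ∈ S, y ≠ q ∧ y ∈ U

/-- In a `T1` space, an open neighborhood of an accumulation point of `S`
meets `S` in an infinite set. -/
lemma acc_inter_infinite {X : Type*} [TopologicalSpace X] [T1Space X] {q : X} {S U : Set X}
    (hq : IsAccumulationPt q S) (hU : IsOpen U) (hqU : q ∈ U) : (S ∩ U).Infinite := by
  intro hfin
  have hF : ((S ∩ U) \ {q}).Finite := hfin.diff
  have hV : IsOpen (U \ ((S ∩ U) \ {q})) := hU.sdiff hF.isClosed
  obtain ⟨y, hyS, hyq, hyV⟩ := hq _ hV ⟨hqU, fun h => h.2 rfl⟩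
  exact hyV.2 ⟨⟨hyS, hyV.1⟩, by simpa using hyq⟩

/-- Recursively pick pairwise-distinct elements, with `pickSeq k ∈ E k`. -/
noncomputable def pickSeq {X : Type*} (E : ℕ → Set X) (hE : ∀ k, (E k).Infinite) : ℕ → X
  | k => ((hE k).diff (Set.finite_range (fun j : Fin k => pickSeq E hE j.1))).nonempty.some
termination_by k => k
decreasing_by all_goals exact j.2

lemma pickSeq_spec {X : Type*} (E : ℕ → Set X) (hE : ∀ k, (E k).Infinite) (k : ℕ) :
    pickSeq E hE k ∈ E k ∧ ∀ j < k, pickSeq E hE k ≠ pickSeq E hE j := by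
  have h := ((hE k).diff (Set.finite_range (fun j : Fin k => pickSeq E hE j.1))).nonempty.some_mem
  rw [pickSeq]
  exact ⟨h.1, fun j hj heq => h.2 ⟨⟨j, hj⟩, heq.symm⟩⟩

/-- Pseudo-intersection: from a sequence of infinite sets `B k` each meeting
each earlier `C j` finitely, extract an infinite set meeting every `C j` finitely. -/
lemma exists_pseudoInter {X : Type*} (B C : ℕ → Set X) (hB : ∀ k, (B k).Infinite)
    (hBC : ∀ j k, j < k → (B k ∩ C j).Finite) :
    ∃ D : Set X, D.Infinite ∧ D ⊆ ⋃ k, B k ∧ ∀ j, (D ∩ C j).Finite := by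
  have hEinf : ∀ k, (B k \ ⋃ j ∈ Set.Iio k, C j).Infinite := by
    intro k
    have h1 : B k \ ⋃ j ∈ Set.Iio k, (B k ∩ C j) ⊆ B k \ ⋃ j ∈ Set.Iio k, C j := by
      rintro x ⟨hx1, hx2⟩
      refine ⟨hx1, fun hc => hx2 ?_⟩
      simp only [Set.mem_iUnion] at hc ⊢
      obtain ⟨i, hi, hc2⟩ := hc
      exact ⟨i, hi, hx1, hc2⟩
    exact Set.Infinite.mono h1
      ((hB k).diff ((Set.finite_Iio k).biUnion fun j hj => hBC j k hj))
  set E : ℕ → Set X := fun k => B k \ ⋃ j ∈ Set.Iio k, C j with hEdef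
  refine ⟨Set.range (pickSeq E hEinf), ?_, ?_, ?_⟩
  · apply Set.infinite_range_of_injective
    intro a b hab
    rcases lt_trichotomy a b with hl | hl | hl
    · exact absurd hab.symm ((pickSeq_spec E hEinf b).2 a hl)
    · exact hl
    · exact absurd hab ((pickSeq_spec E hEinf a).2 b hl)
  · rintro x ⟨k, rfl⟩
    exact Set.mem_iUnion.mpr ⟨k, ((pickSeq_spec E hEinf k).1).1⟩
  · intro j
    apply Set.Finite.subset ((Set.finite_Iic j).image (pickSeq E hEinf))
    rintro x ⟨⟨k, rfl⟩, hxC⟩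
    refine ⟨k, ?_, rfl⟩
    by_contra hk
    simp only [Set.mem_Iic, not_le] at hk
    exact ((pickSeq_spec E hEinf k).1).2 (Set.mem_biUnion (show j ∈ Set.Iio k from hk) hxC)

/-- The auxiliary choice of an infinite subset of `A` meeting each history
member finitely (if one exists). -/
noncomputable def chAux {X : Type*} (A : Set X) (α : Ordinal)
    (hist : (β : Ordinal) → β < α → Set X) : Set X :=
  @dite _ (∃ B : Set X, B ⊆ A ∧ B.Infinite ∧ ∀ β (hβ : β < α), (B ∩ hist β hβ).Finite)
    (Classical.propDecidable _) (fun hw => hw.choose) (fun _ => A)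

lemma chAux_sub {X : Type*} (A : Set X) (hA : A.Infinite) (α : Ordinal)
    (hist : (β : Ordinal) → β < α → Set X) :
    chAux A α hist ⊆ A ∧ (chAux A α hist).Infinite := by
  unfold chAux
  split
  · next hw => exact ⟨hw.choose_spec.1, hw.choose_spec.2.1⟩
  · next => exact ⟨subset_rfl, hA⟩

lemma chAux_spec {X : Type*} (A : Set X) (α : Ordinal)
    (hist : (β : Ordinal) → β < α → Set X)
    (hw : ∃ B : Set X, B ⊆ A ∧ B.Infinite ∧ ∀ β (hβ : β < α), (B ∩ hist β hβ).Finite) :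
    ∀ β (hβ : β < α), (chAux A α hist ∩ hist β hβ).Finite := by
  unfold chAux
  rw [dif_pos hw]
  exact hw.choose_spec.2.2

lemma coverLemma {X : Type*} [TopologicalSpace X] [T2Space X] {B : Set X}
    (_hBinf : B.Infinite) (hacc : {q : X | IsAccumulationPt q B}.Infinite) :
    IsOpenCover {U : Set X | IsOpen U ∧ (B \ U).Infinite} := by
  refine ⟨fun U hU => hU.1, Set.eq_univ_of_forall fun x => ?_⟩
  obtain ⟨d, hd⟩ := (hacc.diff (Set.finite_singleton x)).nonempty
  have hdx : d ≠ x := fun e => hd.2 (by simp [e])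
  obtain ⟨U, V, hUo, hVo, hxU, hdV, hUV⟩ := t2_separation hdx.symm
  refine Set.mem_sUnion.mpr ⟨U, ⟨hUo, ?_⟩, hxU⟩
  refine (acc_inter_infinite hd.1 hVo hdV).mono fun y hy => ?_
  exact ⟨hy.1, fun hyU => Set.disjoint_left.mp hUV hyU hy.2⟩

/-- a Lindelöf Hausdorff space in which player I has no winning
strategy in `G^{ω₁}₁(𝒪,𝒪)` has the finite derived set property. -/
theorem stmt3 {X : Type*} [TopologicalSpace X] [T2Space X] [LindelofSpace X]
    (h : ¬ ∃ σ : StrategyI X, IsWinningStrategyI σ) :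
    ∀ A : Set X, A.Infinite →
      ∃ B ⊆ A, B.Infinite ∧ {q : X | IsAccumulationPt q B}.Finite := by
  classical
  intro A hA
  by_contra hcon
  push_neg at hcon
  have hacc : ∀ B : Set X, B ⊆ A → B.Infinite → {q : X | IsAccumulationPt q B}.Infinite :=
    fun B h1 h2 => hcon B h1 h2
  apply h
  refine ⟨fun α hα hist => {U : Set X | IsOpen U ∧ (chAux A α hist \ U).Infinite}, ?_, ?_⟩
  · intro α hα hist
    exact coverLemma (chAux_sub A hA α hist).2
      (hacc _ (chAux_sub A hA α hist).1 (chAux_sub A hA α hist).2)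
  · intro f hf hcov
    set F : Ordinal → Set X := fun β => if hβ : β < omega1 then f β hβ else (∅ : Set X)
      with hFdef
    have hFf : ∀ β (hβ : β < omega1), F β = f β hβ := fun β hβ => dif_pos hβ
    have key : ∀ α, α < omega1 →
        ∃ B : Set X, B ⊆ A ∧ B.Infinite ∧ ∀ β, β < α → (B ∩ F β).Finite := by
      intro α
      induction α using Ordinal.limitRecOn with
      | zero => exact fun _ => ⟨A, subset_rfl, hA, fun β hβ => absurd hβ (not_lt_of_ge (zero_le (a := β)))⟩
      | add_one o IH =>
        intro hso
        have ho : o < omega1 := (lt_add_one o).trans hso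
        obtain ⟨B0, hB0A, hB0inf, hB0fin⟩ := IH ho
        have hWo : ∃ B : Set X, B ⊆ A ∧ B.Infinite ∧
            ∀ β (hβ : β < o), (B ∩ (fun β (hβ : β < o) => f β (hβ.trans ho)) β hβ).Finite :=
          ⟨B0, hB0A, hB0inf, fun β hβ => by
            have h3 := hB0fin β hβ
            rwa [hFf β (hβ.trans ho)] at h3⟩
        have hfm : IsOpen (f o ho) ∧
            (chAux A o (fun β hβ => f β (hβ.trans ho)) \ f o ho).Infinite := hf o ho
        refine ⟨chAux A o (fun β hβ => f β (hβ.trans ho)) \ f o ho,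
          fun x hx => (chAux_sub A hA o _).1 hx.1, hfm.2, ?_⟩
        intro β hβ
        rcases (Order.lt_add_one_iff.mp hβ).lt_or_eq with hlt | heq
        · refine ((chAux_spec A o _ hWo β hlt).subset ?_)
          intro x hx
          refine ⟨hx.1.1, ?_⟩
          have h4 := hx.2
          rwa [hFf β (hlt.trans ho)] at h4
        · subst heq
          refine Set.Finite.subset Set.finite_empty ?_
          intro x hx
          rw [hFf β ho] at hx
          exact absurd hx.2 hx.1.2
      | limit o ho IH =>
        intro hlo
        have hcnt : (Set.Iio o).Countable := by
          rw [Cardinal.countable_iff_lt_aleph_one, Ordinal.mk_Iio_ordinal]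
          have h1 : o.card < Cardinal.aleph 1 := Cardinal.lt_ord.mp hlo
          have h2 := Cardinal.lift_lt.mpr h1
          rwa [Cardinal.lift_aleph, Ordinal.lift_one] at h2
        have hne : (Set.Iio o).Nonempty := ⟨0, ho.pos⟩
        obtain ⟨e, he⟩ := hcnt.exists_eq_range hne
        have heo : ∀ j, e j < o := fun j => by
          have hm : e j ∈ Set.Iio o := by rw [he]; exact Set.mem_range_self j
          exact hm
        have hδo : ∀ k : ℕ, (Finset.range k).sup (fun j => e j + 1) < o := by
          intro k
          rw [Finset.sup_lt_iff (by rw [Ordinal.bot_eq_zero]; exact ho.pos)]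
          intro j _
          rw [Ordinal.add_one_eq_succ]
          exact ho.succ_lt (heo j)
        have heδ : ∀ j k : ℕ, j < k → e j < (Finset.range k).sup (fun j => e j + 1) := by
          intro j k hjk
          have h1 : e j + 1 ≤ _ := Finset.le_sup (f := fun j => e j + 1) (Finset.mem_range.mpr hjk)
          exact lt_of_lt_of_le (by rw [Ordinal.add_one_eq_succ]; exact Order.lt_succ (e j)) h1
        have hIH : ∀ k : ℕ, ∃ B : Set X, B ⊆ A ∧ B.Infinite ∧
            ∀ β, β < (Finset.range k).sup (fun j => e j + 1) → (B ∩ F β).Finite :=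
          fun k => IH _ (hδo k) ((hδo k).trans hlo)
        choose B' hB'A hB'inf hB'fin using hIH
        obtain ⟨D, hDinf, hDsub, hDfin⟩ := exists_pseudoInter B' (fun j => F (e j)) hB'inf
          (fun j k hjk => hB'fin k (e j) (heδ j k hjk))
        refine ⟨D, hDsub.trans (Set.iUnion_subset fun k => hB'A k), hDinf, ?_⟩
        intro β hβ
        have hm : β ∈ Set.range e := by rw [← he]; exact hβ
        obtain ⟨j, rfl⟩ := hm
        exact hDfin j
    -- now derive a contradiction from the covering assumption
    have hUopen : ∀ i : {α : Ordinal // α < omega1}, IsOpen (f i.1 i.2) := fun i => (hf i.1 i.2).1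
    have hUcov : (Set.univ : Set X) ⊆ ⋃ i : {α : Ordinal // α < omega1}, f i.1 i.2 := by
      rw [← hcov]
      intro x hx
      simp only [Set.mem_iUnion] at hx ⊢
      obtain ⟨α, hα, hm⟩ := hx
      exact ⟨⟨α, hα⟩, hm⟩
    obtain ⟨t, htc, htcov⟩ := isLindelof_univ.elim_countable_subcover
      (fun i : {α : Ordinal // α < omega1} => f i.1 i.2) hUopen hUcov
    have htne : t.Nonempty := by
      obtain ⟨x0, hx0⟩ := hA.nonempty
      have hm := htcov (Set.mem_univ x0)
      simp only [Set.mem_iUnion] at hm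
      obtain ⟨i, hi, _⟩ := hm
      exact ⟨i, hi⟩
    obtain ⟨g, hg⟩ := htc.exists_eq_range htne
    have hsup : iSup (fun n => (g n).1) < omega1 :=
      by
        have := Ordinal.iSup_lt_omega_one (f := fun n => (g n).1)
          (fun n => by rw [← Cardinal.ord_aleph]; exact (g n).2)
        rwa [← Cardinal.ord_aleph] at this
    have hγ : iSup (fun n => (g n).1) + 1 < omega1 := by
      rw [Ordinal.add_one_eq_succ]
      exact (Cardinal.isSuccLimit_ord (Cardinal.aleph0_le_aleph 1)).succ_lt hsup
    obtain ⟨B, hBA, hBinf, hBfin⟩ := key _ hγ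
    obtain ⟨q, hq⟩ := (hacc B hBA hBinf).nonempty
    have hqU := htcov (Set.mem_univ q)
    simp only [Set.mem_iUnion] at hqU
    obtain ⟨i, hit, hqi⟩ := hqU
    have hii : i.1 < iSup (fun n => (g n).1) + 1 := by
      rw [hg] at hit
      obtain ⟨n, rfl⟩ := hit
      calc (g n).1 ≤ iSup (fun n => (g n).1) :=
            le_ciSup (Ordinal.bddAbove_range _) n
        _ < iSup (fun n => (g n).1) + 1 := by
            rw [Ordinal.add_one_eq_succ]; exact Order.lt_succ _
    have hfin := hBfin i.1 hii
    rw [hFf i.1 i.2] at hfin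
    exact (acc_inter_infinite hq (hUopen i) hqi) hfin
end

section
/- Every compact Hausdorff pseudoradial space is sequentially compact. -/
/-- The well-ordered net `(x β)_{β<lam}` converges to `p`: for every open
neighborhood `U` of `p` the net is eventually in `U`. -/
def WONetConvergesTo {X : Type*} [TopologicalSpace X] (lam : Ordinal.{0})
    (x : (β : Ordinal.{0}) → β < lam → X) (p : X) : Prop :=
  ∀ U : Set X, IsOpen U → p ∈ U →
    ∃ β : Ordinal, ∃ _ : β < lam, ∀ (γ : Ordinal.{0}) (hγ : γ < lam), β ≤ γ → x γ hγ ∈ U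

/-- A space is pseudoradial if for every non-closed set `A` there is a
(nonempty) well-ordered net of points of `A` converging to a point outside `A`. -/
def Pseudoradial (X : Type*) [TopologicalSpace X] : Prop :=
  ∀ A : Set X, ¬ IsClosed A →
    ∃ (lam : Ordinal.{0}) (_ : lam ≠ 0) (x : (β : Ordinal.{0}) → β < lam → X) (p : X),
      (∀ β hβ, x β hβ ∈ A) ∧ p ∉ A ∧ WONetConvergesTo lam x p

open Filter Set

/-- From a sequence with finite range, extract a constant subsequence. -/
private lemma const_subseq {X : Type*} {u : ℕ → X} (h : (Set.range u).Finite) :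
    ∃ c, ∃ φ : ℕ → ℕ, StrictMono φ ∧ ∀ j, u (φ j) = c := by
  haveI : Finite (Set.range u) := h.to_subtype
  obtain ⟨⟨c, hc⟩, hfib⟩ :=
    Finite.exists_infinite_fiber (fun n => (⟨u n, Set.mem_range_self n⟩ : Set.range u))
  have hpre : (fun n => (⟨u n, Set.mem_range_self n⟩ : Set.range u)) ⁻¹' {⟨c, hc⟩}
      = {n | u n = c} := by
    ext n; simp [Subtype.ext_iff]
  have hinf : {n : ℕ | u n = c}.Infinite := by
    rw [← Set.infinite_coe_iff, ← hpre]
    exact hfib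
  obtain ⟨φ, hφ, hval⟩ :=
    extraction_of_frequently_atTop (Nat.frequently_atTop_iff_infinite.2 hinf)
  exact ⟨c, φ, hφ, hval⟩

/-- In a compact space, every infinite set has an accumulation point. -/
private lemma exists_acc {X : Type*} [TopologicalSpace X] [CompactSpace X]
    {S : Set X} (hS : S.Infinite) : ∃ p, p ∈ closure (S \ {p}) := by
  classical
  by_contra hcon
  push_neg at hcon
  have key : ∀ p : X, ∃ U : Set X, IsOpen U ∧ p ∈ U ∧ U ∩ (S \ {p}) = ∅ := by
    intro p
    have h1 := hcon p
    rw [mem_closure_iff] at h1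
    push_neg at h1
    obtain ⟨U, hU, hpU, hint⟩ := h1
    exact ⟨U, hU, hpU, hint⟩
  have hclosed : IsClosed S := by
    rw [← closure_subset_iff_isClosed]
    intro p hp
    by_contra hpS
    have hd : S \ {p} = S := Set.diff_singleton_eq_self hpS
    exact hcon p (by rw [hd]; exact hp)
  choose U hUopen hmemU hsep using key
  have hcover : S ⊆ ⋃ i : S, U (i : X) :=
    fun s hs => Set.mem_iUnion.2 ⟨⟨s, hs⟩, hmemU s⟩
  obtain ⟨t, ht⟩ := (hclosed.isCompact).elim_finite_subcover
    (fun i : S => U (i : X)) (fun i => hUopen _) hcover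
  have hsub : S ⊆ ↑(t.image (fun i : S => (i : X))) := by
    intro s hs
    obtain ⟨i, hit, hsU⟩ := Set.mem_iUnion₂.1 (ht hs)
    have heq : s = (i : X) := by
      by_contra hne
      have hmem : s ∈ U (i : X) ∩ (S \ {(i : X)}) := ⟨hsU, hs, hne⟩
      rw [hsep (i : X)] at hmem
      exact hmem
    exact Finset.mem_coe.2 (Finset.mem_image.2 ⟨i, hit, heq.symm⟩)
  exact hS ((t.image _).finite_toSet.subset hsub)

/-- every compact Hausdorff pseudoradial space is sequentially
compact. -/
theorem stmt5 {X : Type*} [TopologicalSpace X] [CompactSpace X] [T2Space X]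
    (h : Pseudoradial X) : SeqCompactSpace X := by
  classical
  constructor
  intro u _hu
  by_cases hfin : (Set.range u).Finite
  · obtain ⟨c, φ, hφ, hc⟩ := const_subseq hfin
    refine ⟨c, Set.mem_univ c, φ, hφ, ?_⟩
    have : u ∘ φ = fun _ => c := funext hc
    rw [this]
    exact tendsto_const_nhds
  · have hSinf : (Set.range u).Infinite := hfin
    obtain ⟨p, hp⟩ := exists_acc hSinf
    set B : Set X := Set.range u \ {p} with hB
    have hpB : p ∉ B := fun hmem => hmem.2 rfl
    have hBnc : ¬ IsClosed B := fun hc => hpB (hc.closure_subset hp)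
    obtain ⟨lam, hlam, xnet, q, hxB, hqB, hconv⟩ := h B hBnc
    have hlam0 : (0 : Ordinal) < lam := pos_iff_ne_zero.2 hlam
    by_cases hcof : ∃ c : X, ∀ β (hβ : β < lam), ∃ γ, ∃ hγ : γ < lam, β ≤ γ ∧ xnet γ hγ = c
    · exfalso
      obtain ⟨c, hc⟩ := hcof
      obtain ⟨γ0, hγ0, _, hval⟩ := hc 0 hlam0
      have hcB : c ∈ B := hval ▸ hxB γ0 hγ0
      have hcq : c ≠ q := fun heq => hqB (heq ▸ hcB)
      obtain ⟨Uc, Uq, hUc, hUq, hcUc, hqUq, hdisj⟩ := t2_separation hcq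
      obtain ⟨β, hβ, htail⟩ := hconv Uq hUq hqUq
      obtain ⟨γ, hγ, hβγ, hγval⟩ := hc β hβ
      have h1 : xnet γ hγ ∈ Uq := htail γ hγ hβγ
      have h2 : xnet γ hγ ∈ Uc := hγval ▸ hcUc
      exact Set.disjoint_left.1 hdisj h2 h1
    · push_neg at hcof
      choose bnd hbndlt hbnd using hcof
      -- `lam` behaves like a limit ordinal
      have hsucc : ∀ γ, γ < lam → γ + 1 < lam := by
        intro γ hγ
        rcases lt_or_eq_of_le (Order.add_one_le_iff.2 hγ) with hlt | heq
        · exact hlt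
        · exfalso
          have hβγ : bnd (xnet γ hγ) ≤ γ := by
            have h1 : bnd (xnet γ hγ) < γ + 1 := heq ▸ hbndlt (xnet γ hγ)
            exact Order.lt_add_one_iff.1 h1
          exact hbnd (xnet γ hγ) γ hγ hβγ rfl
      -- the cofinal ω-sequence of indices
      let βs : ℕ → Ordinal.{0} := fun k => Nat.rec 0 (fun k ih => max (ih + 1) (bnd (u k))) k
      have hβssucc : ∀ k, βs (k + 1) = max (βs k + 1) (bnd (u k)) := fun k => rfl
      have hβslt : ∀ k, βs k < lam := by
        intro k
        induction k with
        | zero => exact hlam0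
        | succ k ih =>
          rw [hβssucc]
          exact max_lt (hsucc _ ih) (hbndlt (u k))
      have hβsmono : StrictMono βs := by
        apply strictMono_nat_of_lt_succ
        intro k
        rw [hβssucc]
        exact lt_of_lt_of_le (Order.lt_add_one_iff.2 le_rfl) (le_max_left _ _)
      have hcofβ : ∀ δ, δ < lam → ∃ k, δ ≤ βs k := by
        intro δ hδ
        by_contra hno
        push_neg at hno
        obtain ⟨n, hn⟩ := (hxB δ hδ).1
        have hb : bnd (u n) ≤ δ := by
          calc bnd (u n) ≤ βs (n + 1) := by rw [hβssucc]; exact le_max_right _ _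
          _ ≤ δ := (hno (n + 1)).le
        exact hbnd (u n) δ hδ hb hn.symm
      -- the ω-sequence extracted from the net
      let y : ℕ → X := fun k => xnet (βs k) (hβslt k)
      have hyB : ∀ k, y k ∈ B := fun k => hxB _ _
      have hyq : Tendsto y atTop (nhds q) := by
        rw [tendsto_nhds]
        intro U hU hqU
        obtain ⟨β, hβ, htail⟩ := hconv U hU hqU
        obtain ⟨K, hK⟩ := hcofβ β hβ
        exact Filter.eventually_atTop.2
          ⟨K, fun k hk => htail (βs k) (hβslt k) (hK.trans (hβsmono.monotone hk))⟩
      have hyne : ∀ k, y k ≠ q := fun k heq => hqB (heq ▸ hyB k)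
      -- the range of `y` is infinite
      have hry : (Set.range y).Infinite := by
        by_contra hcont
        rw [Set.not_infinite] at hcont
        obtain ⟨c, φ, hφ, hconst⟩ := const_subseq hcont
        have h1 : Tendsto (y ∘ φ) atTop (nhds q) := hyq.comp hφ.tendsto_atTop
        have h2 : (y ∘ φ) = fun _ => c := funext hconst
        rw [h2] at h1
        have hcq : q = c := tendsto_nhds_unique h1 tendsto_const_nhds
        exact hyne (φ 0) ((hconst 0).trans hcq.symm)
      -- least original indices realizing the values of `y`
      have hyu : ∀ k, ∃ n, u n = y k := fun k => (hyB k).1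
      let m : ℕ → ℕ := fun k => Nat.find (hyu k)
      have hm : ∀ k, u (m k) = y k := fun k => Nat.find_spec (hyu k)
      have hMinf : {n | ∃ k, m k = n}.Infinite := by
        by_contra hcont
        rw [Set.not_infinite] at hcont
        have hsub : Set.range y ⊆ u '' {n | ∃ k, m k = n} := by
          rintro _ ⟨k, rfl⟩
          exact ⟨m k, ⟨k, rfl⟩, hm k⟩
        exact hry ((hcont.image u).subset hsub)
      let φ : ℕ → ℕ := Nat.nth (fun n => ∃ k, m k = n)
      have hφmono : StrictMono φ := Nat.nth_strictMono hMinf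
      refine ⟨q, Set.mem_univ q, φ, hφmono, ?_⟩
      rw [tendsto_nhds]
      intro U hU hqU
      obtain ⟨K, hK⟩ := Filter.eventually_atTop.1 (tendsto_nhds.1 hyq U hU hqU)
      set N := (Finset.range K).sup m with hN
      refine Filter.eventually_atTop.2 ⟨N + 1, fun j hj => ?_⟩
      have hφj : N < φ j := lt_of_lt_of_le (Nat.lt_of_lt_of_le (Nat.lt_succ_self N) hj)
        hφmono.le_apply
      obtain ⟨k, hk⟩ := Nat.nth_mem_of_infinite hMinf j
      have hk' : m k = φ j := hk
      have hkK : K ≤ k := by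
        by_contra hlt
        push_neg at hlt
        have hle : m k ≤ N := Finset.le_sup (Finset.mem_range.2 hlt)
        omega
      have heq : u (φ j) = y k := by rw [show φ j = m k from hk'.symm]; exact hm k
      rw [Function.comp_apply, heq]
      exact hK k hkK
end
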